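/- arXiv:2502.19914 — 4 statements merged into one kernel-verified Lean document; each statement's English description precedes it below -/
import Mathlib

section
/- The power graph of a finite group G is complete if and only if G is cyclic of order 1 or cyclic of prime power order p^m for some prime p and positive integer m. -/
open Polynomial

/-- The power graph of a group: distinct `x, y` are adjacent iff one is an
integral power of the other. -/
def powerGraph (G : Type*) [Group G] : SimpleGraph G where
  Adj x y := x ≠ y ∧ (x ∈ Subgroup.zpowers y ∨ y ∈ Subgroup.zpowers x)
  symm := ⟨fun _ _ h => ⟨h.1.symm, h.2.symm⟩⟩
  loopless := ⟨fun _ h => h.1 rfl⟩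

/-!
In a finite cyclic group the elements `a` with `a ^ n = 1` are at most `n` in number, so
`⟨y⟩` consists of all of them for `n = orderOf y`; hence `x` is a power of `y` exactly when
`orderOf x ∣ orderOf y`. If the order of the group is `p ^ m`, element orders are powers of
`p`, which are totally ordered by divisibility, so the power graph is complete.

Conversely, if the power graph is complete, an element `g` of maximal order is adjacent to
every `x`, and `g ∈ ⟨x⟩` forces `⟨x⟩ = ⟨g⟩`, so `g` generates `G`. Two distinct primes
dividing `|G|` would give, by Cauchy's theorem, two adjacent elements of distinct prime
orders, although adjacent elements have orders dividing one another.
-/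

open Subgroup Finset

theorem Nat.dvd_or_dvd_of_dvd_prime_pow {p m a b : ℕ} (hp : p.Prime) (ha : a ∣ p ^ m)
    (hb : b ∣ p ^ m) : a ∣ b ∨ b ∣ a := by
  obtain ⟨i, -, rfl⟩ := (Nat.dvd_prime_pow hp).mp ha
  obtain ⟨j, -, rfl⟩ := (Nat.dvd_prime_pow hp).mp hb
  exact (le_total i j).imp (Nat.pow_dvd_pow p) (Nat.pow_dvd_pow p)

theorem IsCyclic.mem_zpowers_iff_orderOf_dvd {G : Type*} [Group G] [Finite G] [IsCyclic G]
    {x y : G} : x ∈ zpowers y ↔ orderOf x ∣ orderOf y := by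
  classical
  have := Fintype.ofFinite G
  refine ⟨orderOf_dvd_of_mem_zpowers, fun hxy => ?_⟩
  let roots : Finset G := {a | a ^ orderOf y = 1}
  have hsub : (zpowers y : Set G).toFinset ⊆ roots := fun a ha => by
    simpa [roots, ← orderOf_dvd_iff_pow_eq_one] using
      orderOf_dvd_of_mem_zpowers (Set.mem_toFinset.mp ha)
  have hcard : #roots ≤ #(zpowers y : Set G).toFinset := by
    rw [← Nat.card_eq_card_toFinset, SetLike.coe_sort_coe, Nat.card_zpowers]
    exact IsCyclic.card_pow_eq_one_le (orderOf_pos y)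
  have hx : x ∈ roots := by simpa [roots, ← orderOf_dvd_iff_pow_eq_one] using hxy
  rwa [← Finset.eq_of_subset_of_card_le hsub hcard, Set.mem_toFinset, SetLike.mem_coe] at hx

section

variable {G : Type*} [Group G]

theorem orderOf_dvd_or_dvd_of_powerGraph_adj {x y : G} (h : (powerGraph G).Adj x y) :
    orderOf x ∣ orderOf y ∨ orderOf y ∣ orderOf x :=
  h.2.imp orderOf_dvd_of_mem_zpowers orderOf_dvd_of_mem_zpowers

theorem IsCyclic.powerGraph_adj_iff [Finite G] [IsCyclic G] {x y : G} :
    (powerGraph G).Adj x y ↔ x ≠ y ∧ (orderOf x ∣ orderOf y ∨ orderOf y ∣ orderOf x) :=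
  Iff.rfl.and (or_congr mem_zpowers_iff_orderOf_dvd mem_zpowers_iff_orderOf_dvd)

theorem powerGraph_adj_of_card_eq_prime_pow [Finite G] [IsCyclic G] {p m : ℕ} (hp : p.Prime)
    (hcard : Nat.card G = p ^ m) {x y : G} (hxy : x ≠ y) : (powerGraph G).Adj x y :=
  IsCyclic.powerGraph_adj_iff.mpr ⟨hxy, Nat.dvd_or_dvd_of_dvd_prime_pow hp
    (hcard ▸ orderOf_dvd_natCard x) (hcard ▸ orderOf_dvd_natCard y)⟩

theorem isCyclic_of_powerGraph_complete [Finite G]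
    (h : ∀ x y : G, x ≠ y → (powerGraph G).Adj x y) : IsCyclic G := by
  obtain ⟨g, hg⟩ := Finite.exists_max (orderOf : G → ℕ)
  refine ⟨g, fun x => mem_zpowers_iff.mp ?_⟩
  rcases eq_or_ne x g with rfl | hxg
  · exact mem_zpowers x
  refine (h x g hxg).2.elim id fun hgx => ?_
  have : zpowers g = zpowers x := eq_of_le_of_card_ge (zpowers_le.mpr hgx)
    (by simpa only [Nat.card_zpowers] using hg x)
  exact this ▸ mem_zpowers x

theorem eq_of_prime_dvd_card_of_powerGraph_complete [Finite G]
    (h : ∀ x y : G, x ≠ y → (powerGraph G).Adj x y) {p q : ℕ} (hp : p.Prime) (hq : q.Prime)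
    (hpG : p ∣ Nat.card G) (hqG : q ∣ Nat.card G) : p = q := by
  have := Fact.mk hp
  have := Fact.mk hq
  obtain ⟨x, hx⟩ := exists_prime_orderOf_dvd_card' p hpG
  obtain ⟨y, hy⟩ := exists_prime_orderOf_dvd_card' q hqG
  by_contra hpq
  have hxy : x ≠ y := fun hxy => hpq (hx ▸ hy ▸ congrArg orderOf hxy)
  rcases orderOf_dvd_or_dvd_of_powerGraph_adj (h x y hxy) with hd | hd <;> rw [hx, hy] at hd
  · exact hpq ((Nat.prime_dvd_prime_iff_eq hp hq).mp hd)
  · exact hpq ((Nat.prime_dvd_prime_iff_eq hq hp).mp hd).symm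

theorem isPrimePow_card_of_powerGraph_complete [Finite G]
    (h : ∀ x y : G, x ≠ y → (powerGraph G).Adj x y) (hG : Nat.card G ≠ 1) :
    IsPrimePow (Nat.card G) := by
  obtain ⟨p, hp, hpG⟩ := Nat.exists_prime_and_dvd hG
  exact isPrimePow_iff_unique_prime_dvd.mpr ⟨p, ⟨hp, hpG⟩, fun q ⟨hq, hqG⟩ =>
    (eq_of_prime_dvd_card_of_powerGraph_complete h hp hq hpG hqG).symm⟩

end

/-- The power graph of a finite group `G` is complete iff `G` is cyclic of order `1`
or cyclic of prime power order. -/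
theorem powerGraph_complete_iff (G : Type*) [Group G] [Fintype G] :
    (∀ x y : G, x ≠ y → (powerGraph G).Adj x y) ↔
      (IsCyclic G ∧ (Fintype.card G = 1 ∨
        ∃ p m : ℕ, p.Prime ∧ 0 < m ∧ Fintype.card G = p ^ m)) := by
  rw [← Nat.card_eq_fintype_card]
  constructor
  · intro h
    refine ⟨isCyclic_of_powerGraph_complete h, (eq_or_ne _ 1).imp_right fun hG => ?_⟩
    obtain ⟨p, m, hp, hm, hpm⟩ :=
      (isPrimePow_nat_iff _).mp (isPrimePow_card_of_powerGraph_complete h hG)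
    exact ⟨p, m, hp, hm, hpm.symm⟩
  · rintro ⟨hcyc, h1 | ⟨p, m, hp, -, hpm⟩⟩
    · exact fun _ _ => powerGraph_adj_of_card_eq_prime_pow Nat.prime_two (by rw [h1, pow_zero])
    · exact fun _ _ => powerGraph_adj_of_card_eq_prime_pow hp hpm
end

section
/- Let p and q be distinct primes. The adjacency matrix of the power graph of D_{2pq} has eigenvalue 0 with multiplicity at least pq - 1 and eigenvalue -1 with multiplicity at least pq - 4. -/
open Polynomial

/-!
Every reflection `sr i` has `1` as its only neighbour in the power graph, so for `i ≠ 0` the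
vectors `e (sr i) - e (sr 0)` lie in the kernel of the adjacency matrix. Two distinct elements
generating the same cyclic subgroup are adjacent and have the same other neighbours, so their
difference vector is a `-1`-eigenvector. Pairing each rotation `r a` with `r (gcd a n)` gives
such vectors for all rotations `r a` with `a` outside the image of `a ↦ gcd a n`, which has at
most one element per divisor of `pq`, hence at most four. Both families are linearly independent,
and geometric multiplicity bounds algebraic multiplicity.
-/

open Matrix Finset

section Spectral

variable {K V : Type*} [Field K] [DecidableEq V]

theorem linearIndependent_single_sub_single {ι : Type*} [DecidableEq ι] {x y : ι → V}
    (hx : Function.Injective x) (hxy : ∀ i j, x i ≠ y j) :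
    LinearIndependent K fun i => (Pi.single (x i) 1 - Pi.single (y i) 1 : V → K) := by
  refine LinearIndependent.of_comp (LinearMap.funLeft K K x) ?_
  convert Pi.linearIndependent_single_one ι K with i
  ext j
  simp [LinearMap.funLeft_apply, Pi.single_apply, hx.eq_iff, hxy, eq_comm]

variable [Fintype V]

theorem Matrix.card_le_rootMultiplicity_charpoly {ι : Type*} [Fintype ι] (A : Matrix V V K)
    (μ : K) (v : ι → V → K) (hv : LinearIndependent K v) (hAv : ∀ i, A *ᵥ v i = μ • v i) :
    Fintype.card ι ≤ A.charpoly.rootMultiplicity μ := by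
  rw [← Matrix.charpoly_toLin']
  refine le_trans ?_ (LinearMap.finrank_eigenspace_le _ μ)
  have hmem : ∀ i, v i ∈ Module.End.eigenspace (Matrix.toLin' A) μ := fun i =>
    Module.End.mem_eigenspace_iff.mpr (by rw [Matrix.toLin'_apply, hAv i])
  exact (LinearIndependent.of_comp (Submodule.subtype _)
    (v := fun i => (⟨v i, hmem i⟩ : Module.End.eigenspace (Matrix.toLin' A) μ)) hv)
    |>.fintype_card_le_finrank

theorem Matrix.card_sub_card_image_le_rootMultiplicity_charpoly {ι : Type*} [Fintype ι]
    [DecidableEq ι] (A : Matrix V V K) (μ : K) {f : ι → V} (hf : Function.Injective f)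
    (g : ι → ι)
    (hAfg : ∀ i ∉ univ.image g, A *ᵥ (Pi.single (f i) 1 - Pi.single (f (g i)) 1) =
      μ • (Pi.single (f i) 1 - Pi.single (f (g i)) 1)) :
    Fintype.card ι - #(univ.image g) ≤ A.charpoly.rootMultiplicity μ := by
  rw [← card_compl, ← Fintype.card_coe]
  refine A.card_le_rootMultiplicity_charpoly μ _ ?_ fun i => hAfg i (mem_compl.mp i.2)
  refine linearIndependent_single_sub_single (hf.comp Subtype.val_injective) fun i j h => ?_
  exact mem_compl.mp i.2 (hf h ▸ mem_image_of_mem g (mem_univ _))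

end Spectral

namespace SimpleGraph

variable {R V : Type*} [NonAssocRing R] [Fintype V] [DecidableEq V] (G : SimpleGraph V)
  [DecidableRel G.Adj]

theorem adjMatrix_mulVec_single_sub_single_of_adj_iff {x y : V}
    (h : ∀ z, G.Adj z x ↔ G.Adj z y) :
    G.adjMatrix R *ᵥ (Pi.single x 1 - Pi.single y 1) = 0 := by
  ext z
  simp [h z]

theorem adjMatrix_mulVec_single_sub_single_of_adj {x y : V} (hxy : G.Adj x y)
    (h : ∀ z, z ≠ x → z ≠ y → (G.Adj z x ↔ G.Adj z y)) :
    G.adjMatrix R *ᵥ (Pi.single x 1 - Pi.single y 1) = -(Pi.single x 1 - Pi.single y 1) := by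
  ext z
  simp only [mulVec_sub, mulVec_single_one, Pi.sub_apply, Pi.neg_apply, col_apply,
    adjMatrix_apply, Pi.single_apply]
  by_cases hzx : z = x
  · subst hzx
    simp [hxy, hxy.ne]
  by_cases hzy : z = y
  · subst hzy
    simp [hxy.symm, hzx]
  simp [h z hzx hzy, hzx, hzy]

end SimpleGraph

section PowerGraph

variable {G : Type*} [Group G] {x y z : G}

theorem powerGraph_adj_of_zpowers_eq (hxy : x ≠ y)
    (h : Subgroup.zpowers x = Subgroup.zpowers y) : (powerGraph G).Adj x y :=
  ⟨hxy, .inl (h ▸ Subgroup.mem_zpowers x)⟩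

theorem powerGraph_adj_iff_of_zpowers_eq (h : Subgroup.zpowers x = Subgroup.zpowers y)
    (hzx : z ≠ x) (hzy : z ≠ y) : (powerGraph G).Adj z x ↔ (powerGraph G).Adj z y := by
  simp only [powerGraph, ← Subgroup.zpowers_le, h, hzx, hzy, ne_eq, not_false_eq_true, true_and]

end PowerGraph

namespace DihedralGroup

variable {n : ℕ} {a b : ZMod n} {z : DihedralGroup n}

theorem r_mem_zpowers_r_iff :
    r b ∈ Subgroup.zpowers (r a) ↔ b ∈ AddSubgroup.zmultiples a := by
  simp [Subgroup.mem_zpowers_iff, AddSubgroup.mem_zmultiples_iff, r_zpow, mul_comm]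

theorem zpowers_r_eq_zpowers_r (h : AddSubgroup.zmultiples a = AddSubgroup.zmultiples b) :
    Subgroup.zpowers (r a) = Subgroup.zpowers (r b) := by
  simp only [le_antisymm_iff, Subgroup.zpowers_le, r_mem_zpowers_r_iff,
    ← AddSubgroup.zmultiples_le] at h ⊢
  exact h

theorem mem_zpowers_sr_iff : z ∈ Subgroup.zpowers (sr a) ↔ z = 1 ∨ z = sr a := by
  refine ⟨fun h => ?_, ?_⟩
  · obtain ⟨k, rfl⟩ := Subgroup.mem_zpowers_iff.mp h
    rw [← zpow_mod_orderOf, orderOf_sr]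
    rcases Int.emod_two_eq k with h | h <;> simp [h]
  · rintro (rfl | rfl)
    exacts [Subgroup.one_mem _, Subgroup.mem_zpowers _]

theorem sr_mem_zpowers_iff : sr a ∈ Subgroup.zpowers z ↔ z = sr a := by
  refine ⟨fun h => ?_, fun h => h ▸ Subgroup.mem_zpowers _⟩
  cases z with
  | r b =>
    obtain ⟨k, hk⟩ := Subgroup.mem_zpowers_iff.mp h
    simp [r_zpow] at hk
  | sr b =>
    rcases mem_zpowers_sr_iff.mp h with h | h
    · simp [one_def, -r_zero] at h
    · exact h.symm

theorem powerGraph_adj_sr_iff : (powerGraph (DihedralGroup n)).Adj z (sr a) ↔ z = 1 := by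
  simp only [powerGraph, mem_zpowers_sr_iff, sr_mem_zpowers_iff]
  constructor
  · rintro ⟨hne, (h | h) | h⟩
    exacts [h, absurd h hne, absurd h hne]
  · rintro rfl
    simp [one_def, -r_zero]

end DihedralGroup

namespace ZMod

variable {n : ℕ}

theorem zmultiples_natCast_gcd (k : ℕ) :
    AddSubgroup.zmultiples ((k.gcd n : ℕ) : ZMod n) = AddSubgroup.zmultiples (k : ZMod n) := by
  have h := congrArg (AddSubgroup.map (Int.castAddHom (ZMod n))) (Int.zmultiples_sup k n)
  simpa [AddSubgroup.map_sup, AddMonoidHom.map_zmultiples] using h.symm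

def gcdGenerator (a : ZMod n) : ZMod n := (a.val.gcd n : ℕ)

variable [NeZero n]

theorem zmultiples_gcdGenerator (a : ZMod n) :
    AddSubgroup.zmultiples a.gcdGenerator = AddSubgroup.zmultiples a := by
  rw [gcdGenerator, zmultiples_natCast_gcd, natCast_zmod_val]

theorem card_image_gcdGenerator_le : #(univ.image (gcdGenerator (n := n))) ≤ #n.divisors := by
  calc #(univ.image (gcdGenerator (n := n)))
      ≤ #(n.divisors.image (Nat.cast : ℕ → ZMod n)) := by
        refine card_le_card fun d hd => ?_
        obtain ⟨a, -, rfl⟩ := mem_image.mp hd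
        exact mem_image_of_mem _ (Nat.mem_divisors.mpr ⟨Nat.gcd_dvd_right _ _, NeZero.ne n⟩)
    _ ≤ #n.divisors := card_image_le

end ZMod

theorem Nat.card_divisors_prime_mul_prime {p q : ℕ} (hp : p.Prime) (hq : q.Prime) (hpq : p ≠ q) :
    #(p * q).divisors = 4 := by
  rw [Nat.Coprime.card_divisors_mul ((Nat.coprime_primes hp hq).mpr hpq), hp.divisors,
    hq.divisors, card_pair hp.one_lt.ne, card_pair hq.one_lt.ne]

open DihedralGroup SimpleGraph

open scoped Classical in
/-- Eigenvalue multiplicity lower bounds for the adjacency matrix of the power graph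
of `D_{2pq}`. -/
theorem adj_eigen_mult (p q : ℕ) (hp : p.Prime) (hq : q.Prime) (hpq : p ≠ q)
    [NeZero (p * q)] :
    p * q - 1 ≤
        (((powerGraph (DihedralGroup (p * q))).adjMatrix ℝ).charpoly).rootMultiplicity 0 ∧
    p * q - 4 ≤
        (((powerGraph (DihedralGroup (p * q))).adjMatrix ℝ).charpoly).rootMultiplicity (-1) := by
  set A := (powerGraph (DihedralGroup (p * q))).adjMatrix ℝ
  constructor
  · have h := A.card_sub_card_image_le_rootMultiplicity_charpoly 0 (fun _ _ => sr.inj)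
      (fun _ => 0) fun _ _ => by
        rw [zero_smul]
        exact adjMatrix_mulVec_single_sub_single_of_adj_iff _ fun z => by
          rw [powerGraph_adj_sr_iff, powerGraph_adj_sr_iff]
    rwa [image_const univ_nonempty, card_singleton, ZMod.card] at h
  · have h := A.card_sub_card_image_le_rootMultiplicity_charpoly (-1) (fun _ _ => r.inj)
      ZMod.gcdGenerator fun a ha => by
        have hne : r a ≠ r a.gcdGenerator := fun h =>
          ha (r.inj h ▸ mem_image_of_mem _ (mem_univ a))
        have hz := zpowers_r_eq_zpowers_r (ZMod.zmultiples_gcdGenerator a).symm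
        rw [neg_one_smul]
        exact adjMatrix_mulVec_single_sub_single_of_adj _ (powerGraph_adj_of_zpowers_eq hne hz)
          fun z => powerGraph_adj_iff_of_zpowers_eq hz
    have h4 := Nat.card_divisors_prime_mul_prime hp hq hpq ▸ ZMod.card_image_gcdGenerator_le
    rw [ZMod.card] at h
    omega
end

section
/- Let n ≥ 3 and suppose n is not a prime power. Then the power graph of the dihedral group D_{2n} contains two nonidentity rotations that are not adjacent; hence the induced subgraph on the rotation subgroup ⟨a⟩ is not complete. -/
/-! Two distinct primes `p, q ∣ n` give rotations of orders `p` and `q`; as the order of a power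
divides the order of the element, neither rotation is a power of the other. -/

open Polynomial

theorem powerGraph_not_adj_of_not_dvd_orderOf {G : Type*} [Group G] {x y : G}
    (hxy : ¬ orderOf x ∣ orderOf y) (hyx : ¬ orderOf y ∣ orderOf x) :
    ¬ (powerGraph G).Adj x y := by
  rintro ⟨-, hx | hy⟩
  · exact hxy (orderOf_dvd_of_mem_zpowers hx)
  · exact hyx (orderOf_dvd_of_mem_zpowers hy)

theorem DihedralGroup.orderOf_r_natCast_div {n d : ℕ} [NeZero n] (hd : d ∣ n) :
    orderOf (r ((n / d : ℕ) : ZMod n)) = d := by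
  rw [← r_one_pow]
  simpa using orderOf_pow_orderOf_div (x := (r 1 : DihedralGroup n))
    (by simpa using NeZero.ne n) (by simpa using hd)

/-- If `n ≥ 3` is not a prime power, then the power graph of `D_{2n}` contains two
distinct nonidentity rotations that are not adjacent; hence the induced subgraph on
the rotation subgroup is not complete. -/
theorem exists_nonadjacent_rotations (n : ℕ) (hn : 3 ≤ n) (h : ¬ IsPrimePow n) :
    ∃ i j : ZMod n,
      DihedralGroup.r i ≠ (1 : DihedralGroup n) ∧
      DihedralGroup.r j ≠ (1 : DihedralGroup n) ∧
      DihedralGroup.r i ≠ DihedralGroup.r j ∧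
      ¬ (powerGraph (DihedralGroup n)).Adj (DihedralGroup.r i) (DihedralGroup.r j) := by
  obtain ⟨p, hp, q, hq, hpq⟩ := (Nat.not_isPrimePow_iff_nontrivial_of_two_le (by omega)).1 h
  have : NeZero n := ⟨by omega⟩
  have hp_ord := DihedralGroup.orderOf_r_natCast_div (Nat.dvd_of_mem_primeFactors hp)
  have hq_ord := DihedralGroup.orderOf_r_natCast_div (Nat.dvd_of_mem_primeFactors hq)
  replace hp := Nat.prime_of_mem_primeFactors hp
  replace hq := Nat.prime_of_mem_primeFactors hq
  refine ⟨(n / p : ℕ), (n / q : ℕ), ?_, ?_, ?_, ?_⟩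
  · rw [Ne, ← orderOf_eq_one_iff, hp_ord]
    exact hp.ne_one
  · rw [Ne, ← orderOf_eq_one_iff, hq_ord]
    exact hq.ne_one
  · exact fun heq => hpq (by rw [← hp_ord, ← hq_ord, heq])
  · apply powerGraph_not_adj_of_not_dvd_orderOf <;> rw [hp_ord, hq_ord]
    · exact fun hdvd => hpq ((Nat.prime_dvd_prime_iff_eq hp hq).1 hdvd)
    · exact fun hdvd => hpq ((Nat.prime_dvd_prime_iff_eq hq hp).1 hdvd).symm
end

section
/- Let p and q be distinct primes. The trace of the square of the adjacency matrix of the power graph of D_{2pq} (which equals twice the number of edges) equals (2pq - 1) + (p-1)(q-1)(pq-1) + (q-1)(pq-p) + (p-1)(pq-q) + pq, and this equals the sum of the squares of all adjacency eigenvalues. -/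
open Polynomial

/-!
Both sides equal `trace (A * A)`: for a real symmetric matrix this is the sum of the squared
eigenvalues, and for a graph it is the degree sum. In `D_{2n}` a reflection is adjacent only to
the identity, the identity to everything, and two rotations `r i`, `r j` are adjacent iff `i ∣ j`
or `j ∣ i` in `ZMod n`. The degree sum is therefore `n² + n` minus the number of ordered
incomparable pairs in `ZMod (pq)`, and through `ZMod (pq) ≃ ZMod p × ZMod q` an incomparable pair
is one element supported on the first factor and the other on the second: `2 (p - 1) (q - 1)`.
-/

open Finset

namespace Matrix.IsHermitian

variable {𝕜 n : Type*} [RCLike 𝕜] [Fintype n] [DecidableEq n] {A : Matrix n n 𝕜}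

theorem trace_mul_self_eq_sum_sq_eigenvalues (hA : A.IsHermitian) :
    (A * A).trace = ∑ i, (hA.eigenvalues i : 𝕜) ^ 2 := by
  conv_lhs => rw [hA.spectral_theorem, ← map_mul, Unitary.conjStarAlgAut_apply, trace_mul_cycle,
    Unitary.coe_star_mul_self, one_mul, diagonal_mul_diagonal, trace_diagonal]
  simp [sq]

theorem sum_sq_roots_charpoly (hA : A.IsHermitian) :
    (A.charpoly.roots.map (· ^ 2)).sum = (A * A).trace := by
  rw [hA.trace_mul_self_eq_sum_sq_eigenvalues, hA.roots_charpoly_eq_eigenvalues, Multiset.map_map]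
  rfl

end Matrix.IsHermitian

theorem SimpleGraph.trace_adjMatrix_mul_self {V R : Type*} [Fintype V] [NonAssocSemiring R]
    (G : SimpleGraph V) [DecidableRel G.Adj] :
    (G.adjMatrix R * G.adjMatrix R).trace = ∑ v, (G.degree v : R) := by
  simp only [Matrix.trace, Matrix.diag_apply, G.adjMatrix_mul_self_apply_self]

theorem card_ne_and_comparable_add_card_incomparable {α : Type*} [Fintype α] [DecidableEq α]
    (r : α → α → Prop) [DecidableRel r] (hr : ∀ a, r a a) :
    #{x : α × α | x.1 ≠ x.2 ∧ (r x.1 x.2 ∨ r x.2 x.1)} + #{x : α × α | ¬r x.1 x.2 ∧ ¬r x.2 x.1}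
      + Fintype.card α = Fintype.card α ^ 2 := by
  have hdiag : Fintype.card α = #{x : α × α | x.1 = x.2} := by
    rw [card_filter, Fintype.sum_prod_type]
    simp
  rw [sq, ← Fintype.card_prod, hdiag, card_filter, card_filter, card_filter, ← sum_add_distrib,
    ← sum_add_distrib, Fintype.card_eq_sum_ones]
  refine sum_congr rfl fun ⟨a, b⟩ _ => ?_
  by_cases hab : a = b
  · subst hab
    simp [hr]
  · by_cases h : r a b <;> by_cases h' : r b a <;> simp [hab, h, h']

section FieldProduct

open scoped Classical

/-- In a product of fields `x ∣ y` iff `y` vanishes wherever `x` does, so an incomparable pair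
is a nonzero element of `K × 0` together with a nonzero element of `0 × L`. -/
theorem card_incomparable_prod {K L : Type*} [Field K] [Field L] [Fintype K] [Fintype L] :
    #{x : (K × L) × (K × L) | ¬x.1 ∣ x.2 ∧ ¬x.2 ∣ x.1} =
      2 * ((Fintype.card K - 1) * (Fintype.card L - 1)) := by
  set A : Finset (K × L) := {0}ᶜ ×ˢ {0}
  set B : Finset (K × L) := {0} ×ˢ {0}ᶜ
  have hsplit : ({x | ¬x.1 ∣ x.2 ∧ ¬x.2 ∣ x.1} : Finset ((K × L) × (K × L))) =
      A ×ˢ B ∪ B ×ˢ A := by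
    ext ⟨⟨a, b⟩, c, d⟩
    simp only [Prod.mk_dvd_mk, GroupWithZero.dvd_iff, mem_filter, mem_univ, true_and, mem_union,
      mem_product, A, B, mem_compl, mem_singleton]
    tauto
  have hdisj : Disjoint (A ×ˢ B) (B ×ˢ A) := by
    simp only [disjoint_left, mem_product, A, B, mem_compl, mem_singleton]
    tauto
  rw [hsplit, card_union_of_disjoint hdisj]
  simp only [A, B, card_product, card_compl, card_singleton]
  ring

theorem ZMod.card_incomparable_of_primes {p q : ℕ} [NeZero (p * q)] (hp : p.Prime) (hq : q.Prime)
    (hpq : p ≠ q) :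
    #{x : ZMod (p * q) × ZMod (p * q) | ¬x.1 ∣ x.2 ∧ ¬x.2 ∣ x.1} = 2 * ((p - 1) * (q - 1)) := by
  have : Fact p.Prime := ⟨hp⟩
  have : Fact q.Prime := ⟨hq⟩
  let e := ZMod.chineseRemainder ((Nat.coprime_primes hp hq).mpr hpq)
  have h := card_incomparable_prod (K := ZMod p) (L := ZMod q)
  rw [ZMod.card, ZMod.card] at h
  -- `h` uses the divisibility of the `Field` structures on `ZMod p` and `ZMod q`.
  refine (card_equiv (e.toEquiv.prodCongr e.toEquiv) fun x => ?_).trans (by convert h using 4)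
  simp [map_dvd_iff]

end FieldProduct

namespace DihedralGroup

variable {n : ℕ} {i j : ZMod n}

theorem r_mem_zpowers_r_iff_s17 : r i ∈ Subgroup.zpowers (r j) ↔ j ∣ i := by
  simp only [Subgroup.mem_zpowers_iff, r_zpow, r.injEq]
  constructor
  · rintro ⟨k, hk⟩
    exact ⟨k, hk.symm⟩
  · rintro ⟨c, rfl⟩
    obtain ⟨k, rfl⟩ := ZMod.intCast_surjective c
    exact ⟨k, rfl⟩

theorem sr_notMem_zpowers_r : sr i ∉ Subgroup.zpowers (r j) := by
  simp [Subgroup.mem_zpowers_iff, r_zpow]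

theorem mem_zpowers_sr_iff_s17 {x : DihedralGroup n} :
    x ∈ Subgroup.zpowers (sr j) ↔ x = 1 ∨ x = sr j := by
  rw [(orderOf_pos_iff.mp (by simp [orderOf_sr])).mem_zpowers_iff_mem_range_orderOf, orderOf_sr]
  simp [Nat.le_one_iff_eq_zero_or_eq_one, or_and_right, exists_or, eq_comm]

theorem powerGraph_adj_r_r :
    (powerGraph (DihedralGroup n)).Adj (r i) (r j) ↔ i ≠ j ∧ (i ∣ j ∨ j ∣ i) := by
  simp [powerGraph, r_mem_zpowers_r_iff_s17, or_comm]

theorem powerGraph_adj_r_sr : (powerGraph (DihedralGroup n)).Adj (r i) (sr j) ↔ i = 0 := by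
  simp [powerGraph, mem_zpowers_sr_iff_s17, sr_notMem_zpowers_r, -r_zero, one_def]

theorem not_powerGraph_adj_sr_sr : ¬(powerGraph (DihedralGroup n)).Adj (sr i) (sr j) := by
  simp +contextual [powerGraph, mem_zpowers_sr_iff_s17, -r_zero, one_def, eq_comm]

theorem sum_univ_eq_sum_r_add_sum_sr [NeZero n] {M : Type*} [AddCommMonoid M]
    (f : DihedralGroup n → M) :
    ∑ x, f x = ∑ i, f (r i) + ∑ i, f (sr i) :=
  (equivSum.symm.sum_comp f).symm.trans (Fintype.sum_sum_type _)

open scoped Classical in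
theorem sum_degree_powerGraph [NeZero n] :
    ∑ x, (powerGraph (DihedralGroup n)).degree x =
      #{x : ZMod n × ZMod n | x.1 ≠ x.2 ∧ (x.1 ∣ x.2 ∨ x.2 ∣ x.1)} + 2 * n := by
  have hdeg (x : DihedralGroup n) := (powerGraph (DihedralGroup n)).degree_eq_sum_if_adj (R := ℕ) x
  simp only [Nat.cast_id] at hdeg
  simp only [hdeg, sum_univ_eq_sum_r_add_sum_sr, powerGraph_adj_r_r, powerGraph_adj_r_sr,
    (powerGraph _).adj_comm (sr _) (r _), not_powerGraph_adj_sr_sr]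
  rw [card_filter, Fintype.sum_prod_type]
  simp [sum_add_distrib, two_mul, add_assoc]

end DihedralGroup

open scoped Classical in
/-- The trace of the square of the adjacency matrix of the power graph of `D_{2pq}`,
and the sum of the squares of its eigenvalues. -/
theorem trace_adj_sq_dihedral (p q : ℕ) (hp : p.Prime) (hq : q.Prime) (hpq : p ≠ q)
    [NeZero (p * q)] :
    Matrix.trace ((powerGraph (DihedralGroup (p * q))).adjMatrix ℝ
        * (powerGraph (DihedralGroup (p * q))).adjMatrix ℝ)
      = ((2 * p * q - 1 : ℝ) + (p - 1) * (q - 1) * (p * q - 1) + (q - 1) * (p * q - p)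
          + (p - 1) * (p * q - q) + p * q) ∧
    ((((powerGraph (DihedralGroup (p * q))).adjMatrix ℝ).charpoly.roots.map
        (fun μ => μ ^ 2)).sum)
      = ((2 * p * q - 1 : ℝ) + (p - 1) * (q - 1) * (p * q - 1) + (q - 1) * (p * q - p)
          + (p - 1) * (p * q - q) + p * q) := by
  rw [((powerGraph _).isHermitian_adjMatrix ℝ).sum_sq_roots_charpoly, and_self,
    SimpleGraph.trace_adjMatrix_mul_self, ← Nat.cast_sum, DihedralGroup.sum_degree_powerGraph]
  have hcount := card_ne_and_comparable_add_card_incomparable (α := ZMod (p * q)) (· ∣ ·) dvd_refl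
  rw [ZMod.card, ZMod.card_incomparable_of_primes hp hq hpq] at hcount
  rify [hp.one_le, hq.one_le] at hcount
  push_cast
  linear_combination hcount
end
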